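/- arXiv:1112.5850 — 2 statements merged into one kernel-verified Lean document; each statement's English description precedes it below -/
import Mathlib

section
/- Let R̄ be a balanced ensemble and α > 0. The set T_α(R̄) of all ensembles of the form (α^{n1}·r̄_DE, α^{n2}·r̄_DP, α^{n3}·r̄_DY, α^{n4}·r̄_EP, α^{n5}·r̄_EY, α^{n6}·r̄_PY) with integer exponents n_i is invariant under each of the 24 arbitrage operations, where an arbitrage operation either leaves the ensemble unchanged or replaces one principal rate by the product (or quotient) of two others as specified in the arbitrage table (e.g., r_DE ↦ r_DP / r_EP). -/
open Classical

/-- An ensemble of principal exchange rates: index `0 = r_DE`, `1 = r_DP`, `2 = r_DY`,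
`3 = r_EP`, `4 = r_EY`, `5 = r_PY`. An arbitrage operation has an activation condition,
a target rate, and a new value for the target rate. -/
structure Arb where
  cond : (Fin 6 → ℝ) → Prop
  idx : Fin 6
  val : (Fin 6 → ℝ) → ℝ

/-- Applying an arbitrage: if its activation condition holds, the target rate is replaced
by the specified product/quotient of two other rates; otherwise the ensemble is unchanged. -/
noncomputable def applyArb (A : Arb) (R : Fin 6 → ℝ) : Fin 6 → ℝ :=
  if A.cond R then Function.update R A.idx (A.val R) else R

/-- The 24 arbitrage operations from the arbitrage table. -/
noncomputable def arbs : List Arb := [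
  ⟨fun R => R 3 > R 0 * R 1, 0, fun R => R 1 / R 3⟩,
  ⟨fun R => R 2 > R 0 * R 4, 0, fun R => R 2 / R 4⟩,
  ⟨fun R => R 0 * R 3 > R 1, 1, fun R => R 0 * R 3⟩,
  ⟨fun R => R 2 > R 1 * R 5, 1, fun R => R 2 / R 5⟩,
  ⟨fun R => R 0 * R 4 > R 2, 2, fun R => R 0 * R 4⟩,
  ⟨fun R => R 1 * R 5 > R 2, 2, fun R => R 1 * R 5⟩,
  ⟨fun R => R 1 < R 0 * R 3, 0, fun R => R 1 / R 3⟩,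
  ⟨fun R => R 2 < R 0 * R 4, 0, fun R => R 2 / R 4⟩,
  ⟨fun R => R 1 > R 3 * R 0, 3, fun R => R 1 / R 0⟩,
  ⟨fun R => R 4 > R 3 * R 5, 3, fun R => R 4 / R 5⟩,
  ⟨fun R => R 2 > R 4 * R 0, 4, fun R => R 2 / R 0⟩,
  ⟨fun R => R 3 * R 5 > R 4, 4, fun R => R 3 * R 5⟩,
  ⟨fun R => R 0 * R 3 < R 1, 1, fun R => R 0 * R 3⟩,
  ⟨fun R => R 2 < R 1 * R 5, 1, fun R => R 2 / R 5⟩,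
  ⟨fun R => R 1 < R 3 * R 0, 3, fun R => R 1 / R 0⟩,
  ⟨fun R => R 4 < R 3 * R 5, 3, fun R => R 4 / R 5⟩,
  ⟨fun R => R 2 > R 5 * R 1, 5, fun R => R 2 / R 1⟩,
  ⟨fun R => R 4 > R 5 * R 3, 5, fun R => R 4 / R 3⟩,
  ⟨fun R => R 0 * R 4 < R 2, 2, fun R => R 0 * R 4⟩,
  ⟨fun R => R 1 * R 5 < R 2, 2, fun R => R 1 * R 5⟩,
  ⟨fun R => R 2 < R 4 * R 0, 4, fun R => R 2 / R 0⟩,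
  ⟨fun R => R 3 * R 5 < R 4, 4, fun R => R 3 * R 5⟩,
  ⟨fun R => R 2 < R 5 * R 1, 5, fun R => R 2 / R 1⟩,
  ⟨fun R => R 4 < R 5 * R 3, 5, fun R => R 4 / R 3⟩]

/-- Balanced ensemble: `r_EP = r_DP/r_DE`, `r_EY = r_DY/r_DE`, `r_PY = r_DY/r_DP`. -/
def IsBalanced (R : Fin 6 → ℝ) : Prop :=
  R 3 = R 1 / R 0 ∧ R 4 = R 2 / R 0 ∧ R 5 = R 2 / R 1

/-- The set `T_α(R̄)` of all ensembles `(α^{n1}·r̄_DE, …, α^{n6}·r̄_PY)` with integer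
exponents. -/
def Talpha (α : ℝ) (Rbar : Fin 6 → ℝ) : Set (Fin 6 → ℝ) :=
  {R | ∃ n : Fin 6 → ℤ, ∀ i, R i = α ^ (n i) * Rbar i}

lemma mem_upd {α : ℝ} {Rbar R : Fin 6 → ℝ} (hR : R ∈ Talpha α Rbar) (i : Fin 6) {v : ℝ}
    (hv : ∃ m : ℤ, v = α ^ m * Rbar i) : Function.update R i v ∈ Talpha α Rbar := by
  obtain ⟨n, hn⟩ := hR
  obtain ⟨m, hm⟩ := hv
  refine ⟨Function.update n i m, fun j => ?_⟩
  by_cases h : j = i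
  · subst h; simp [hm]
  · simp [Function.update_of_ne h, hn]

/-- For a balanced ensemble `R̄` and `α > 0`, the set `T_α(R̄)` is invariant under each of
the 24 arbitrage operations. -/
theorem stmt3 (α : ℝ) (hα : 0 < α) (Rbar : Fin 6 → ℝ) (hpos : ∀ i, 0 < Rbar i)
    (hbal : IsBalanced Rbar) :
    ∀ A ∈ arbs, ∀ R ∈ Talpha α Rbar, applyArb A R ∈ Talpha α Rbar := by
  obtain ⟨h3, h4, h5⟩ := hbal
  intro A hA R hR
  have hne : α ≠ 0 := hα.ne'
  have p0 := (hpos 0).ne'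
  have p1 := (hpos 1).ne'
  have p2 := (hpos 2).ne'
  obtain ⟨n, hn⟩ := hR
  have hRT : R ∈ Talpha α Rbar := ⟨n, hn⟩
  fin_cases hA
  · simp only [applyArb]
    split
    · exact mem_upd hRT _ ⟨n 1 - n 3, by
        simp only [hn, h3, h4, h5, zpow_sub₀ hne]; field_simp; try ring⟩
    · exact hRT
  · simp only [applyArb]
    split
    · exact mem_upd hRT _ ⟨n 2 - n 4, by
        simp only [hn, h3, h4, h5, zpow_sub₀ hne]; field_simp; try ring⟩
    · exact hRT
  · simp only [applyArb]
    split
    · exact mem_upd hRT _ ⟨n 0 + n 3, by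
        simp only [hn, h3, h4, h5, zpow_add₀ hne]; field_simp; try ring⟩
    · exact hRT
  · simp only [applyArb]
    split
    · exact mem_upd hRT _ ⟨n 2 - n 5, by
        simp only [hn, h3, h4, h5, zpow_sub₀ hne]; field_simp; try ring⟩
    · exact hRT
  · simp only [applyArb]
    split
    · exact mem_upd hRT _ ⟨n 0 + n 4, by
        simp only [hn, h3, h4, h5, zpow_add₀ hne]; field_simp; try ring⟩
    · exact hRT
  · simp only [applyArb]
    split
    · exact mem_upd hRT _ ⟨n 1 + n 5, by
        simp only [hn, h3, h4, h5, zpow_add₀ hne]; field_simp; try ring⟩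
    · exact hRT
  · simp only [applyArb]
    split
    · exact mem_upd hRT _ ⟨n 1 - n 3, by
        simp only [hn, h3, h4, h5, zpow_sub₀ hne]; field_simp; try ring⟩
    · exact hRT
  · simp only [applyArb]
    split
    · exact mem_upd hRT _ ⟨n 2 - n 4, by
        simp only [hn, h3, h4, h5, zpow_sub₀ hne]; field_simp; try ring⟩
    · exact hRT
  · simp only [applyArb]
    split
    · exact mem_upd hRT _ ⟨n 1 - n 0, by
        simp only [hn, h3, h4, h5, zpow_sub₀ hne]; field_simp; try ring⟩
    · exact hRT
  · simp only [applyArb]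
    split
    · exact mem_upd hRT _ ⟨n 4 - n 5, by
        simp only [hn, h3, h4, h5, zpow_sub₀ hne]; field_simp; try ring⟩
    · exact hRT
  · simp only [applyArb]
    split
    · exact mem_upd hRT _ ⟨n 2 - n 0, by
        simp only [hn, h3, h4, h5, zpow_sub₀ hne]; field_simp; try ring⟩
    · exact hRT
  · simp only [applyArb]
    split
    · exact mem_upd hRT _ ⟨n 3 + n 5, by
        simp only [hn, h3, h4, h5, zpow_add₀ hne]; field_simp; try ring⟩
    · exact hRT
  · simp only [applyArb]
    split
    · exact mem_upd hRT _ ⟨n 0 + n 3, by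
        simp only [hn, h3, h4, h5, zpow_add₀ hne]; field_simp; try ring⟩
    · exact hRT
  · simp only [applyArb]
    split
    · exact mem_upd hRT _ ⟨n 2 - n 5, by
        simp only [hn, h3, h4, h5, zpow_sub₀ hne]; field_simp; try ring⟩
    · exact hRT
  · simp only [applyArb]
    split
    · exact mem_upd hRT _ ⟨n 1 - n 0, by
        simp only [hn, h3, h4, h5, zpow_sub₀ hne]; field_simp; try ring⟩
    · exact hRT
  · simp only [applyArb]
    split
    · exact mem_upd hRT _ ⟨n 4 - n 5, by
        simp only [hn, h3, h4, h5, zpow_sub₀ hne]; field_simp; try ring⟩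
    · exact hRT
  · simp only [applyArb]
    split
    · exact mem_upd hRT _ ⟨n 2 - n 1, by
        simp only [hn, h3, h4, h5, zpow_sub₀ hne]; field_simp; try ring⟩
    · exact hRT
  · simp only [applyArb]
    split
    · exact mem_upd hRT _ ⟨n 4 - n 3, by
        simp only [hn, h3, h4, h5, zpow_sub₀ hne]; field_simp; try ring⟩
    · exact hRT
  · simp only [applyArb]
    split
    · exact mem_upd hRT _ ⟨n 0 + n 4, by
        simp only [hn, h3, h4, h5, zpow_add₀ hne]; field_simp; try ring⟩
    · exact hRT
  · simp only [applyArb]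
    split
    · exact mem_upd hRT _ ⟨n 1 + n 5, by
        simp only [hn, h3, h4, h5, zpow_add₀ hne]; field_simp; try ring⟩
    · exact hRT
  · simp only [applyArb]
    split
    · exact mem_upd hRT _ ⟨n 2 - n 0, by
        simp only [hn, h3, h4, h5, zpow_sub₀ hne]; field_simp; try ring⟩
    · exact hRT
  · simp only [applyArb]
    split
    · exact mem_upd hRT _ ⟨n 3 + n 5, by
        simp only [hn, h3, h4, h5, zpow_add₀ hne]; field_simp; try ring⟩
    · exact hRT
  · simp only [applyArb]
    split
    · exact mem_upd hRT _ ⟨n 2 - n 1, by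
        simp only [hn, h3, h4, h5, zpow_sub₀ hne]; field_simp; try ring⟩
    · exact hRT
  · simp only [applyArb]
    split
    · exact mem_upd hRT _ ⟨n 4 - n 3, by
        simp only [hn, h3, h4, h5, zpow_sub₀ hne]; field_simp; try ring⟩
    · exact hRT
end

section
/- Let α > 0, α ≠ 1, and let R̄ be a balanced ensemble. If an ensemble R ∈ T_α(R̄) has exponent vector (n1,...,n6) and is obtained from R̄_α = (α·r̄_DE, r̄_DP, r̄_DY, r̄_EP, r̄_EY, r̄_PY) by a finite chain of arbitrage operations, then |n1 − n2 + n4| ≤ 1, |n1 − n3 + n5| ≤ 1, and |n2 − n3 + n6| ≤ 1. -/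
open Classical

/-!
In log coordinates an arbitrage operation zeroes the discrepancy of one currency triangle and
adds plus or minus that discrepancy to the other triangle containing the updated rate, leaving the
remaining two triangles alone. So the sum of the absolute discrepancies of the four triangles
never increases, activated or not. It is `2 |log α|` at `R̄_α` and `|log α|` times an integer sum
at `R ∈ T_α(R̄)`; as the four discrepancies have alternating sum zero, each is at most half of
that sum, hence at most `1`.
-/

open Real

/-- For log-rates `x`, the four terms are the log-discrepancies of the triangles
DEP, DEY, DPY and EPY. -/
def faceImbalance (x : Fin 6 → ℝ) : ℝ :=
  |x 0 + x 3 - x 1| + |x 0 + x 4 - x 2| + |x 1 + x 5 - x 2| + |x 3 + x 5 - x 4|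

theorem faceImbalance_log_zpow_mul {α : ℝ} (hα : 0 < α) {Rbar : Fin 6 → ℝ}
    (hpos : ∀ i, 0 < Rbar i) (hbal : IsBalanced Rbar) (m : Fin 6 → ℤ) :
    faceImbalance (fun i => log (α ^ m i * Rbar i)) =
      |log α| * faceImbalance (fun i => (m i : ℝ)) := by
  obtain ⟨h3, h4, h5⟩ := hbal
  have h3 : log (Rbar 3) = log (Rbar 1) - log (Rbar 0) := by
    rw [h3, log_div (hpos 1).ne' (hpos 0).ne']
  have h4 : log (Rbar 4) = log (Rbar 2) - log (Rbar 0) := by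
    rw [h4, log_div (hpos 2).ne' (hpos 0).ne']
  have h5 : log (Rbar 5) = log (Rbar 2) - log (Rbar 1) := by
    rw [h5, log_div (hpos 2).ne' (hpos 1).ne']
  simp only [faceImbalance, log_mul (zpow_pos hα _).ne' (hpos _).ne', log_zpow, h3, h4, h5,
    mul_add, ← abs_mul]
  ring_nf

theorem abs_le_one_of_faceImbalance_le_two (m : Fin 6 → ℤ)
    (h : faceImbalance (fun i => (m i : ℝ)) ≤ 2) :
    |m 0 - m 1 + m 3| ≤ 1 ∧ |m 0 - m 2 + m 4| ≤ 1 ∧ |m 1 - m 2 + m 5| ≤ 1 := by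
  have hint :
      |m 0 + m 3 - m 1| + |m 0 + m 4 - m 2| + |m 1 + m 5 - m 2| + |m 3 + m 5 - m 4| ≤ 2 := by
    simp only [faceImbalance] at h
    exact_mod_cast h
  grind

theorem applyArb_pos {A : Arb} (hA : A ∈ arbs) {R : Fin 6 → ℝ} (hR : ∀ i, 0 < R i)
    (i : Fin 6) : 0 < applyArb A R i := by
  simp only [arbs, List.mem_cons, List.not_mem_nil, or_false] at hA
  unfold applyArb
  split_ifs
  · rw [Function.update_apply]
    split_ifs
    · rcases hA with rfl|rfl|rfl|rfl|rfl|rfl|rfl|rfl|rfl|rfl|rfl|rfl|rfl|rfl|rfl|rfl|rfl|rfl|rfl|rfl|rfl|rfl|rfl|rfl <;>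
        first | exact mul_pos (hR _) (hR _) | exact div_pos (hR _) (hR _)
    · exact hR i
  · exact hR i

theorem faceImbalance_log_applyArb_le {A : Arb} (hA : A ∈ arbs) {R : Fin 6 → ℝ}
    (hR : ∀ i, 0 < R i) :
    faceImbalance (fun i => log (applyArb A R i)) ≤ faceImbalance (fun i => log (R i)) := by
  simp only [arbs, List.mem_cons, List.not_mem_nil, or_false] at hA
  unfold applyArb
  split_ifs
  · rcases hA with rfl|rfl|rfl|rfl|rfl|rfl|rfl|rfl|rfl|rfl|rfl|rfl|rfl|rfl|rfl|rfl|rfl|rfl|rfl|rfl|rfl|rfl|rfl|rfl <;>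
    · simp only [faceImbalance, Function.update_apply, Fin.isValue, Fin.reduceEq, reduceIte,
        log_mul (hR _).ne' (hR _).ne', log_div (hR _).ne' (hR _).ne']
      grind
  · exact le_rfl

theorem foldl_applyArb_pos {L : List Arb} (hL : ∀ A ∈ L, A ∈ arbs) {R : Fin 6 → ℝ}
    (hR : ∀ i, 0 < R i) (i : Fin 6) : 0 < L.foldl (fun r A => applyArb A r) R i := by
  induction L generalizing R with
  | nil => exact hR i
  | cons A L ih =>
    exact ih (fun B hB => hL B (List.mem_cons_of_mem A hB))
      (applyArb_pos (hL A List.mem_cons_self) hR)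

theorem faceImbalance_log_foldl_applyArb_le {L : List Arb} (hL : ∀ A ∈ L, A ∈ arbs)
    {R : Fin 6 → ℝ} (hR : ∀ i, 0 < R i) :
    faceImbalance (fun i => log (L.foldl (fun r A => applyArb A r) R i)) ≤
      faceImbalance (fun i => log (R i)) := by
  induction L generalizing R with
  | nil => exact le_rfl
  | cons A L ih =>
    have hA := hL A List.mem_cons_self
    exact (ih (fun B hB => hL B (List.mem_cons_of_mem A hB)) (applyArb_pos hA hR)).trans
      (faceImbalance_log_applyArb_le hA hR)

/-- If an ensemble `R ∈ T_α(R̄)` with exponent vector `(n1,…,n6)` (indices: `n 0 = n1`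
for `r_DE`, …, `n 5 = n6` for `r_PY`) is obtained from
`R̄_α = (α·r̄_DE, r̄_DP, r̄_DY, r̄_EP, r̄_EY, r̄_PY)` by a finite chain of the 24 arbitrage
operations, then `|n1 − n2 + n4| ≤ 1`, `|n1 − n3 + n5| ≤ 1`, `|n2 − n3 + n6| ≤ 1`. -/
theorem stmt18 (α : ℝ) (hα : 0 < α) (hα1 : α ≠ 1)
    (Rbar : Fin 6 → ℝ) (hpos : ∀ i, 0 < Rbar i) (hbal : IsBalanced Rbar)
    (L : List Arb) (hL : ∀ A ∈ L, A ∈ arbs)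
    (R : Fin 6 → ℝ)
    (hR : R = L.foldl (fun r A => applyArb A r) (Function.update Rbar 0 (α * Rbar 0)))
    (n : Fin 6 → ℤ) (hn : ∀ i, R i = α ^ (n i) * Rbar i) :
    |n 0 - n 1 + n 3| ≤ 1 ∧ |n 0 - n 2 + n 4| ≤ 1 ∧ |n 1 - n 2 + n 5| ≤ 1 := by
  have hR₀ : Function.update Rbar 0 (α * Rbar 0) =
      fun i => α ^ (Pi.single 0 1 : Fin 6 → ℤ) i * Rbar i := by
    funext i
    fin_cases i <;> simp
  have hsingle : faceImbalance (fun i => ((Pi.single 0 1 : Fin 6 → ℤ) i : ℝ)) = 2 := by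
    norm_num [faceImbalance, Pi.single_apply, Fin.ext_iff]
  have hdecay := faceImbalance_log_foldl_applyArb_le hL
    (R := Function.update Rbar 0 (α * Rbar 0))
    (fun i => by rw [hR₀]; exact mul_pos (zpow_pos hα _) (hpos i))
  rw [← hR, hR₀] at hdecay
  simp only [hn] at hdecay
  rw [faceImbalance_log_zpow_mul hα hpos hbal, faceImbalance_log_zpow_mul hα hpos hbal,
    hsingle] at hdecay
  have hlog : 0 < |log α| := abs_pos.mpr (log_ne_zero_of_pos_of_ne_one hα hα1)
  exact abs_le_one_of_faceImbalance_le_two n (le_of_mul_le_mul_left hdecay hlog)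
end
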